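/- arXiv:1908.02370 — 3 statements merged into one kernel-verified Lean document; each statement's English description precedes it below -/
import Mathlib

section
/- Let a, b ∈ ℝ^p, c₁, c₂ > 0, λ ≥ 0. If 2c₁c₂‖a−b‖ ≤ (c₁+c₂)λ, then the pair (x, y) = ((c₁a+c₂b)/(c₁+c₂), (c₁a+c₂b)/(c₁+c₂)) minimizes the function F(x,y) = c₁‖x−a‖² + c₂‖y−b‖² + λ‖x−y‖ over all x, y ∈ ℝ^p. -/
theorem two_point_gfl_fused_case (p : ℕ) (a b : EuclideanSpace ℝ (Fin p))
    (c₁ c₂ lam : ℝ) (hc₁ : 0 < c₁) (hc₂ : 0 < c₂) (hlam : 0 ≤ lam)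
    (h : 2 * c₁ * c₂ * ‖a - b‖ ≤ (c₁ + c₂) * lam) :
    ∀ x y : EuclideanSpace ℝ (Fin p),
      c₁ * ‖(c₁ + c₂)⁻¹ • (c₁ • a + c₂ • b) - a‖ ^ 2
        + c₂ * ‖(c₁ + c₂)⁻¹ • (c₁ • a + c₂ • b) - b‖ ^ 2
        + lam * ‖((c₁ + c₂)⁻¹ • (c₁ • a + c₂ • b)) - ((c₁ + c₂)⁻¹ • (c₁ • a + c₂ • b))‖
      ≤ c₁ * ‖x - a‖ ^ 2 + c₂ * ‖y - b‖ ^ 2 + lam * ‖x - y‖ := by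
  intro x y
  have hcs : (0:ℝ) < c₁ + c₂ := by linarith
  have e1 : (c₁ + c₂)⁻¹ • (c₁ • a + c₂ • b) - a = (c₁ + c₂)⁻¹ • (c₂ • (b - a)) := by
    calc (c₁ + c₂)⁻¹ • (c₁ • a + c₂ • b) - a
        = (c₁ + c₂)⁻¹ • (c₁ • a + c₂ • b) - (c₁ + c₂)⁻¹ • ((c₁ + c₂) • a) := by
          rw [inv_smul_smul₀ hcs.ne']
      _ = (c₁ + c₂)⁻¹ • (c₁ • a + c₂ • b - (c₁ + c₂) • a) := by rw [smul_sub]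
      _ = (c₁ + c₂)⁻¹ • (c₂ • (b - a)) := by congr 1; module
  have e2 : (c₁ + c₂)⁻¹ • (c₁ • a + c₂ • b) - b = (c₁ + c₂)⁻¹ • (c₁ • (a - b)) := by
    calc (c₁ + c₂)⁻¹ • (c₁ • a + c₂ • b) - b
        = (c₁ + c₂)⁻¹ • (c₁ • a + c₂ • b) - (c₁ + c₂)⁻¹ • ((c₁ + c₂) • b) := by
          rw [inv_smul_smul₀ hcs.ne']
      _ = (c₁ + c₂)⁻¹ • (c₁ • a + c₂ • b - (c₁ + c₂) • b) := by rw [smul_sub]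
      _ = (c₁ + c₂)⁻¹ • (c₁ • (a - b)) := by congr 1; module
  have n1 : ‖(c₁ + c₂)⁻¹ • (c₁ • a + c₂ • b) - a‖ = (c₁ + c₂)⁻¹ * c₂ * ‖a - b‖ := by
    rw [e1, norm_smul, norm_smul, ← norm_neg (b - a)]
    simp only [Real.norm_eq_abs, abs_of_pos hc₂, abs_of_pos (inv_pos.mpr hcs), neg_sub]
    ring
  have n2 : ‖(c₁ + c₂)⁻¹ • (c₁ • a + c₂ • b) - b‖ = (c₁ + c₂)⁻¹ * c₁ * ‖a - b‖ := by
    rw [e2, norm_smul, norm_smul]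
    simp only [Real.norm_eq_abs, abs_of_pos hc₁, abs_of_pos (inv_pos.mpr hcs)]
    ring
  have tri : ‖a - b‖ ≤ ‖x - a‖ + ‖x - y‖ + ‖y - b‖ := by
    have : a - b = (a - x) + (x - y) + (y - b) := by abel
    rw [this]
    calc ‖(a - x) + (x - y) + (y - b)‖ ≤ ‖(a - x) + (x - y)‖ + ‖y - b‖ := norm_add_le _ _
      _ ≤ ‖a - x‖ + ‖x - y‖ + ‖y - b‖ := by gcongr; exact norm_add_le _ _
      _ = ‖x - a‖ + ‖x - y‖ + ‖y - b‖ := by rw [norm_sub_rev]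
  simp only [sub_self, norm_zero, mul_zero, add_zero, n1, n2]
  set d := ‖a - b‖ with hdd
  set s := ‖x - a‖ with hss
  set t := ‖y - b‖ with htt
  set w := ‖x - y‖ with hww
  have hd : 0 ≤ d := norm_nonneg _
  have hs : 0 ≤ s := norm_nonneg _
  have ht : 0 ≤ t := norm_nonneg _
  have hw : 0 ≤ w := norm_nonneg _
  have hinv : (c₁ + c₂)⁻¹ * (c₁ + c₂) = 1 := inv_mul_cancel₀ hcs.ne'
  -- lam * w ≥ 2*c₁*c₂/(c₁+c₂) * d * (d - s - t)
  have key : 2 * c₁ * c₂ * d * (d - s - t) ≤ (c₁ + c₂) * (lam * w) := by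
    rcases le_or_gt (d - s - t) 0 with hcase | hcase
    · have h1 : 2 * c₁ * c₂ * d * (d - s - t) ≤ 0 :=
        mul_nonpos_of_nonneg_of_nonpos (by positivity) hcase
      have h2 : 0 ≤ (c₁ + c₂) * (lam * w) := by positivity
      linarith
    · have hdw : d - s - t ≤ w := by linarith
      nlinarith [mul_le_mul_of_nonneg_right h hw, mul_le_mul_of_nonneg_left hdw
        (show (0:ℝ) ≤ 2 * c₁ * c₂ * d by positivity)]
  have lhs_eq : c₁ * ((c₁ + c₂)⁻¹ * c₂ * d) ^ 2 + c₂ * ((c₁ + c₂)⁻¹ * c₁ * d) ^ 2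
      = c₁ * c₂ * d ^ 2 / (c₁ + c₂) := by
    field_simp
    ring
  rw [lhs_eq, div_le_iff₀ hcs]
  have h1 : 0 ≤ c₁ * ((c₁ + c₂) * s - c₂ * d) ^ 2 := mul_nonneg hc₁.le (sq_nonneg _)
  have h2 : 0 ≤ c₂ * ((c₁ + c₂) * t - c₁ * d) ^ 2 := mul_nonneg hc₂.le (sq_nonneg _)
  have key' := mul_le_mul_of_nonneg_left key hcs.le
  have main : (c₁ + c₂) * (c₁ * c₂ * d ^ 2)
      ≤ (c₁ + c₂) * ((c₁ * s ^ 2 + c₂ * t ^ 2 + lam * w) * (c₁ + c₂)) := by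
    linarith [h1, h2, key']
  exact le_of_mul_le_mul_left main hcs
end

section
/- Let a, b ∈ ℝ^p, c₁, c₂ > 0, λ ≥ 0, with a ≠ b and 2c₁c₂‖a−b‖ > (c₁+c₂)λ. Then the pair (x, y) with x = a − (λ/(2c₁))·(a−b)/‖a−b‖ and y = b − (λ/(2c₂))·(b−a)/‖b−a‖ minimizes F(x,y) = c₁‖x−a‖² + c₂‖y−b‖² + λ‖x−y‖ over all x, y ∈ ℝ^p. -/
/-!
Write `d = ‖a - b‖` and `u = (a - b) / d`. Completing the square in `x - a` and in `y - b`
against `±λ u`, and bounding `λ ‖x - y‖ ≥ λ ⟪u, x - y⟫ = λ (⟪u, x - a⟫ - ⟪u, y - b⟫ + d)`,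
gives `F(x, y) ≥ λ d - λ² / (4 c₁) - λ² / (4 c₂)` everywhere. The candidate moves `a` and `b`
towards each other along `u` by `λ / (2 c₁)` and `λ / (2 c₂)`; the hypothesis on `‖a - b‖` says
they do not cross, so `‖x - y‖` is `d` minus both steps and `F` attains the bound there.
-/

open scoped RealInnerProductSpace

section

variable {E : Type*} [NormedAddCommGroup E] [InnerProductSpace ℝ E]

/-- The two-point group fused lasso objective `F(x, y)`. -/
def gflObjective (c₁ c₂ lam : ℝ) (a b x y : E) : ℝ :=
  c₁ * ‖x - a‖ ^ 2 + c₂ * ‖y - b‖ ^ 2 + lam * ‖x - y‖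

lemma neg_norm_sq_div_le_mul_norm_sq_add_inner {c : ℝ} (hc : 0 < c) (w v : E) :
    -(‖w‖ ^ 2 / (4 * c)) ≤ c * ‖v‖ ^ 2 + ⟪w, v⟫ := by
  have hsq : 0 ≤ ‖(2 * c) • v + w‖ ^ 2 := sq_nonneg _
  rw [norm_add_sq_real, norm_smul, real_inner_smul_left, real_inner_comm,
    Real.norm_of_nonneg (by positivity)] at hsq
  rw [neg_le, neg_add', le_div_iff₀ (by positivity)]
  nlinarith

variable {c₁ c₂ lam d : ℝ} {a b u : E}

lemma le_gflObjective (hc₁ : 0 < c₁) (hc₂ : 0 < c₂) (hlam : 0 ≤ lam) (hu : ‖u‖ = 1)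
    (habu : a - b = d • u) (x y : E) :
    lam * d - lam ^ 2 / (4 * c₁) - lam ^ 2 / (4 * c₂) ≤ gflObjective c₁ c₂ lam a b x y := by
  have hw : ‖lam • u‖ ^ 2 = lam ^ 2 := by rw [norm_smul, hu, mul_one, Real.norm_eq_abs, sq_abs]
  have hx := neg_norm_sq_div_le_mul_norm_sq_add_inner hc₁ (lam • u) (x - a)
  have hy := neg_norm_sq_div_le_mul_norm_sq_add_inner hc₂ (-(lam • u)) (y - b)
  rw [hw] at hx
  rw [norm_neg, hw] at hy
  have hcs : lam * ⟪u, x - y⟫ ≤ lam * ‖x - y‖ :=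
    mul_le_mul_of_nonneg_left ((real_inner_le_norm u _).trans_eq (by rw [hu, one_mul])) hlam
  have hsplit : lam * ⟪u, x - y⟫ = ⟪lam • u, x - a⟫ + ⟪-(lam • u), y - b⟫ + lam * d := by
    rw [show x - y = (x - a) - (y - b) + d • u by rw [← habu]; abel, inner_add_right,
      inner_sub_right, real_inner_smul_right, real_inner_self_eq_norm_sq, hu, inner_neg_left,
      real_inner_smul_left, real_inner_smul_left]
    ring
  unfold gflObjective
  linarith

lemma gflObjective_sub_smul_add_smul {s t : ℝ} (hs : 0 ≤ s) (ht : 0 ≤ t) (hst : s + t ≤ d)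
    (hu : ‖u‖ = 1) (habu : a - b = d • u) :
    gflObjective c₁ c₂ lam a b (a - s • u) (b + t • u)
      = c₁ * s ^ 2 + c₂ * t ^ 2 + lam * (d - (s + t)) := by
  have hnorm {r : ℝ} (hr : 0 ≤ r) : ‖r • u‖ = r := by
    rw [norm_smul, hu, mul_one, Real.norm_of_nonneg hr]
  have hxy : a - s • u - (b + t • u) = (d - (s + t)) • u := by
    rw [sub_smul, add_smul, ← habu]; abel
  rw [gflObjective, sub_sub_cancel_left, norm_neg, add_sub_cancel_left, hxy, hnorm hs, hnorm ht,
    hnorm (sub_nonneg.mpr hst)]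

end

theorem two_point_gfl_unfused_case (p : ℕ) (a b : EuclideanSpace ℝ (Fin p))
    (c₁ c₂ lam : ℝ) (hc₁ : 0 < c₁) (hc₂ : 0 < c₂) (hlam : 0 ≤ lam)
    (hab : a ≠ b) (h : (c₁ + c₂) * lam < 2 * c₁ * c₂ * ‖a - b‖) :
    ∀ x y : EuclideanSpace ℝ (Fin p),
      c₁ * ‖(a - (lam / (2 * c₁)) • (‖a - b‖⁻¹ • (a - b))) - a‖ ^ 2
        + c₂ * ‖(b - (lam / (2 * c₂)) • (‖b - a‖⁻¹ • (b - a))) - b‖ ^ 2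
        + lam * ‖(a - (lam / (2 * c₁)) • (‖a - b‖⁻¹ • (a - b)))
                  - (b - (lam / (2 * c₂)) • (‖b - a‖⁻¹ • (b - a)))‖
      ≤ c₁ * ‖x - a‖ ^ 2 + c₂ * ‖y - b‖ ^ 2 + lam * ‖x - y‖ := by
  intro x y
  have hd : 0 < ‖a - b‖ := norm_sub_pos_iff.mpr hab
  set u := ‖a - b‖⁻¹ • (a - b)
  have hu : ‖u‖ = 1 := norm_smul_inv_norm (sub_ne_zero.mpr hab)
  have habu : a - b = ‖a - b‖ • u := by rw [smul_smul, mul_inv_cancel₀ hd.ne', one_smul]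
  have hba : ‖b - a‖⁻¹ • (b - a) = -u := by rw [norm_sub_rev, ← neg_sub a b, smul_neg]
  have hst : lam / (2 * c₁) + lam / (2 * c₂) ≤ ‖a - b‖ := by
    rw [div_add_div _ _ (by positivity) (by positivity), div_le_iff₀ (by positivity)]
    nlinarith
  rw [hba, smul_neg, sub_neg_eq_add]
  change gflObjective c₁ c₂ lam a b _ _ ≤ gflObjective c₁ c₂ lam a b x y
  rw [gflObjective_sub_smul_add_smul (by positivity) (by positivity) hst hu habu]
  refine le_of_eq_of_le ?_ (le_gflObjective hc₁ hc₂ hlam hu habu x y)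
  field_simp
  ring
end

section
/- Let t₁, t₂ ∈ ℝ^p, ρ > 0, λ ≥ 0. The minimization over (z₁, z₂) ∈ ℝ^p × ℝ^p of (ρ/2)‖z₁ − t₁‖² + (ρ/2)‖z₂ − t₂‖² + λ‖z₁ − z₂‖ has a minimizer with z₁ = z₂ = (t₁+t₂)/2 if and only if ρ‖t₁ − t₂‖ ≤ 2λ. -/
theorem network_lasso_fusion_iff (p : ℕ) (t₁ t₂ : EuclideanSpace ℝ (Fin p))
    (ρ lam : ℝ) (hρ : 0 < ρ) (hlam : 0 ≤ lam) :
    (∀ z₁ z₂ : EuclideanSpace ℝ (Fin p),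
      (ρ / 2) * ‖(2 : ℝ)⁻¹ • (t₁ + t₂) - t₁‖ ^ 2
        + (ρ / 2) * ‖(2 : ℝ)⁻¹ • (t₁ + t₂) - t₂‖ ^ 2
        + lam * ‖((2 : ℝ)⁻¹ • (t₁ + t₂)) - ((2 : ℝ)⁻¹ • (t₁ + t₂))‖
      ≤ (ρ / 2) * ‖z₁ - t₁‖ ^ 2 + (ρ / 2) * ‖z₂ - t₂‖ ^ 2 + lam * ‖z₁ - z₂‖)
    ↔ ρ * ‖t₁ - t₂‖ ≤ 2 * lam := by
  have hL1 : (2 : ℝ)⁻¹ • (t₁ + t₂) - t₁ = (2 : ℝ)⁻¹ • (t₂ - t₁) := by module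
  have hL2 : (2 : ℝ)⁻¹ • (t₁ + t₂) - t₂ = (2 : ℝ)⁻¹ • (t₁ - t₂) := by module
  constructor
  · intro h
    by_contra hc
    push_neg at hc
    set D := ‖t₁ - t₂‖ with hDdef
    have hD0 : 0 < D := by
      rcases (norm_nonneg (t₁ - t₂)).lt_or_eq with h' | h'
      · exact h'
      · exfalso; rw [← hDdef] at h'; nlinarith
    set ε : ℝ := (ρ * D - 2 * lam) / (2 * ρ) with hεdef
    have hε0 : 0 < ε := div_pos (by linarith) (by linarith)
    set u : EuclideanSpace ℝ (Fin p) := D⁻¹ • (t₁ - t₂) with hudef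
    have hDu : D • u = t₁ - t₂ := by
      rw [hudef, smul_smul, mul_inv_cancel₀ hD0.ne', one_smul]
    have hu : ‖u‖ = 1 := by
      rw [hudef, norm_smul, Real.norm_eq_abs, abs_of_pos (inv_pos.2 hD0)]
      rw [← hDdef]; field_simp
    have ht₁ : t₁ = t₂ + D • u := by rw [hDu]; abel
    clear_value u
    have key := h ((2 : ℝ)⁻¹ • (t₁ + t₂) + ε • u) ((2 : ℝ)⁻¹ • (t₁ + t₂) - ε • u)
    have e1 : (2 : ℝ)⁻¹ • (t₁ + t₂) + ε • u - t₁ = (ε - D / 2) • u := by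
      rw [ht₁]; module
    have e2 : (2 : ℝ)⁻¹ • (t₁ + t₂) - ε • u - t₂ = (D / 2 - ε) • u := by
      rw [ht₁]; module
    have e3 : ((2 : ℝ)⁻¹ • (t₁ + t₂) + ε • u) - ((2 : ℝ)⁻¹ • (t₁ + t₂) - ε • u)
        = (2 * ε) • u := by module
    have eL1' : (2 : ℝ)⁻¹ • (t₂ - t₁) = (-(D / 2)) • u := by rw [ht₁]; module
    rw [hL1, hL2, eL1', e1, e2, e3, sub_self, norm_zero] at key
    simp only [norm_smul, hu, mul_one, ← hDdef, Real.norm_eq_abs, sq_abs,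
      abs_of_pos (by norm_num : (0:ℝ) < (2:ℝ)⁻¹), mul_zero, add_zero] at key
    rw [abs_of_pos (by linarith : (0:ℝ) < 2 * ε)] at key
    have hρε : ρ * ε ^ 2 = ε * (ρ * D - 2 * lam) / 2 := by
      rw [hεdef]; field_simp
    nlinarith [mul_pos hε0 (by linarith : (0:ℝ) < ρ * D - 2 * lam)]
  · intro hle z₁ z₂
    have hcab : ‖(z₁ - t₁) - (z₂ - t₂)‖ ≤ ‖z₁ - t₁‖ + ‖z₂ - t₂‖ := norm_sub_le _ _
    have hid : t₁ - t₂ = (z₁ - z₂) - ((z₁ - t₁) - (z₂ - t₂)) := by module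
    have he : ‖t₁ - t₂‖ ≤ ‖z₁ - z₂‖ + ‖(z₁ - t₁) - (z₂ - t₂)‖ := by
      rw [hid]; exact norm_sub_le _ _
    rw [hL1, hL2, sub_self, norm_zero, norm_smul, norm_smul, Real.norm_eq_abs,
      abs_of_pos (by norm_num : (0:ℝ) < (2:ℝ)⁻¹), norm_sub_rev t₂ t₁]
    set a := ‖z₁ - t₁‖
    set b := ‖z₂ - t₂‖
    set c := ‖(z₁ - t₁) - (z₂ - t₂)‖
    set e := ‖z₁ - z₂‖
    set D := ‖t₁ - t₂‖
    have ha : 0 ≤ a := norm_nonneg _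
    have hb : 0 ≤ b := norm_nonneg _
    have hcn : 0 ≤ c := norm_nonneg _
    have hen : 0 ≤ e := norm_nonneg _
    have hDn : 0 ≤ D := norm_nonneg _
    nlinarith [mul_nonneg hρ.le (sq_nonneg (a - b)),
      mul_nonneg hρ.le (sq_nonneg (c - D)),
      mul_nonneg (by linarith : (0:ℝ) ≤ 2 * lam - ρ * D) hen,
      mul_nonneg (mul_nonneg hρ.le hDn) (by linarith : (0:ℝ) ≤ e - (D - c)),
      mul_le_mul_of_nonneg_left (mul_self_le_mul_self hcn hcab) hρ.le]
end
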